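/- (Limit extension.) Suppose Γ is a cofinal subset of some limit ordinal γ < κ, δ ∈ (γ, κ), and ⟨(T^β, f^β, z^β) : β ∈ Γ⟩ is a sequence such that: ⟨⟨T^β, f^β⟩ : β ∈ Γ⟩ is a decreasing sequence of conditions in S^κ_X; for every β ∈ Γ, z^β : (β, δ) → T^β, where for every i with β < i < δ: z^β(i) belongs to the top level of T^β, z^β(i) is not =*-equivalent to z^β(i') for every i' ∈ (β, δ)∖{i}, z^β(i) is not =*-equivalent to f^β(η_{T^β})(0), and z^β(i) and f^β(η_{T^β})(τ) are mutually exclusive for every nonzero τ < θ; and for all α, β ∈ Γ: supp(f^α(η_{T^α}), f^β(η_{T^β})) = θ, and z^α(i) ⊆ z^β(i) whenever α < β < i < δ. Then there exist a condition ⟨T^γ, f^γ⟩ in S^κ_X and a function z^γ : (γ, δ) → T^γ such that: η_{T^γ} = sup{η_{T^β} : β ∈ Γ}; z^γ(i) = ⋃{z^β(i) : β ∈ Γ} for every i with γ < i < δ; for every β ∈ Γ, ⟨T^γ, f^γ⟩ ≤ ⟨T^β, f^β⟩ and supp(f^β(η_{T^β}), f^γ(η_{T^γ})) = θ; and a function y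 : η_{T^γ} → κ belongs to T^γ iff either y = x * f^γ(η_{T^γ})(τ) for some x ∈ ⋃{T^β : β ∈ Γ} and τ < θ, or y = x * z^γ(i) for some x ∈ ⋃{T^β : β ∈ Γ} and i ∈ (γ, δ). -/

import Mathlib

noncomputable section

open Ordinal Set

/-- A node of a streamlined tree over `κ` is a function `s : α → κ` for an ordinal `α`;
we code it by its graph, a set of pairs `(ε, v)`. -/
abbrev PNode : Type 1 := Set (Ordinal × Ordinal)

/-- The set of ordinals in the domain of a coded node. -/
def ndom (s : PNode) : Set Ordinal := {ε | ∃ v, (ε, v) ∈ s}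

/-- `s` codes a function from (the ordinals below) `α` to (the ordinals below) `ν`. -/
def IsNodeOf (ν α : Ordinal) (s : PNode) : Prop :=
  (∀ p ∈ s, p.1 < α ∧ p.2 < ν) ∧ ∀ ε, ε < α → ∃! v : Ordinal, (ε, v) ∈ s

/-- The restriction `s ↾ α` of a node. -/
def nrestrict (s : PNode) (α : Ordinal) : PNode := {p ∈ s | p.1 < α}

/-- The node `s * t`, with domain `dom t`, agreeing with `s` on `dom s` and with `t` elsewhere. -/
def nstar (s t : PNode) : PNode :=
  {p ∈ s | p.1 ∈ ndom t} ∪ {p ∈ t | p.1 ∉ ndom s}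

/-- The `α`-th level of a tree. -/
def level (T : Set PNode) (α : Ordinal) : Set PNode := {t ∈ T | ndom t = Set.Iio α}

/-- A streamlined tree: closed under restrictions. -/
def IsStreamlined (T : Set PNode) : Prop := ∀ t ∈ T, ∀ α : Ordinal, nrestrict t α ∈ T

/-- Uniform homogeneity. -/
def UnifHomog (T : Set PNode) : Prop := ∀ s ∈ T, ∀ t ∈ T, nstar s t ∈ T

/-- Normality for a tree of height `h`. -/
def IsNormalOfHeight (T : Set PNode) (h : Ordinal) : Prop :=
  ∀ x ∈ T, ∀ α, α < h → ∃ y ∈ level T α, x ⊆ y ∨ y ⊆ x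

/-- Two nodes are mutually exclusive iff they disagree everywhere on their common domain. -/
def MutExc (s t : PNode) : Prop :=
  ∀ ε v w : Ordinal, (ε, v) ∈ s → (ε, w) ∈ t → v ≠ w

/-- `s =* t` : same domain and agreement on a final segment of the domain. -/
def EqStar (s t : PNode) : Prop :=
  ndom s = ndom t ∧ ∃ α ∈ ndom s, ∀ β, α ≤ β → ∀ v : Ordinal, ((β, v) ∈ s ↔ (β, v) ∈ t)

/-- `Δ(s,t)`: the least element of `{dom s, dom t} ∪ {δ ∈ dom s ∩ dom t ∣ s(δ) ≠ t(δ)}`. -/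
def nDelta (s t : PNode) : Ordinal :=
  sInf ({δ | δ ∉ ndom s} ∪ {δ | δ ∉ ndom t} ∪
    {δ | ∃ v w : Ordinal, (δ, v) ∈ s ∧ (δ, w) ∈ t ∧ v ≠ w})

/-- `supp(f,g)` for two `θ`-sequences of nodes. -/
def supp (θo : Ordinal) (f g : Ordinal → PNode) : Set Ordinal :=
  {τ | τ < θo ∧ (f τ ⊆ g τ ∨ g τ ⊆ f τ)}

/-- An `α`-branch of `T`. -/
def IsBranch (T : Set PNode) (α : Ordinal) (B : Set PNode) : Prop :=
  B ⊆ T ∧ (∀ x ∈ B, ∀ y ∈ B, x ⊆ y ∨ y ⊆ x) ∧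
    {β : Ordinal | ∃ x ∈ B, ndom x = Set.Iio β} = Set.Iio α

/-- The set `V(T)` of vanishing levels of `T`. -/
def VSet (T : Set PNode) : Set Ordinal :=
  {α | Order.IsSuccLimit α ∧ ∀ x ∈ T, (∃ β, β < α ∧ ndom x = Set.Iio β) →
    ∃ B, IsBranch T α B ∧ x ∈ B ∧ ⋃₀ B ∉ T}

/-- A closed set of ordinals. -/
def OrdClosed (A : Set Ordinal) : Prop :=
  ∀ α : Ordinal, Order.IsSuccLimit α → (∀ β, β < α → (A ∩ Set.Ioo β α).Nonempty) → α ∈ A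

/-- A mutually exclusive `F`-ascent path (`F` given via the membership predicate `InF`)
through a tree `T` of height `γ`. -/
def MEAscentPath (θo : Ordinal) (InF : Set Ordinal → Prop) (T : Set PNode) (γ : Ordinal)
    (f : Ordinal → Ordinal → PNode) : Prop :=
  (∀ α, α < γ → ∀ τ, τ < θo → f α τ ∈ level T α) ∧
  (∀ α β, α < β → β < γ → InF (supp θo (f α) (f β))) ∧
  (∀ α, 0 < α → α < γ → ∀ τ τ', τ < θo → τ' < θo → τ ≠ τ' → MutExc (f α τ) (f α τ'))

/-- A condition: a pair `⟨T, f⟩` together with the ordinal `η` such that `T` has height `η + 1`. -/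
structure SCond : Type 1 where
  T : Set PNode
  f : Ordinal.{0} → Ordinal.{0} → PNode
  η : Ordinal.{0}

/-- Membership in the filter generated by the decreasing sequence `X` of length `ζ`. -/
def InFX (ζ : Ordinal) (X : Ordinal → Set Ordinal) (Y : Set Ordinal) : Prop :=
  ∃ ξ, ξ < ζ ∧ X ξ ⊆ Y

/-- `p` is a condition of the forcing `𝕊^κ_𝐗`. -/
def IsSCondX (κ : Cardinal) (θo : Ordinal) (InF : Set Ordinal → Prop) (p : SCond) : Prop :=
  (∀ t ∈ p.T, ∃ α, α ≤ p.η ∧ IsNodeOf κ.ord α t) ∧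
  IsStreamlined p.T ∧
  UnifHomog p.T ∧
  IsNormalOfHeight p.T (p.η + 1) ∧
  (∀ α, α ≤ p.η → (level p.T α).Nonempty) ∧
  (∀ α, α ≤ p.η → Cardinal.mk ↥(level p.T α) < Cardinal.lift.{1} κ) ∧
  MEAscentPath θo InF p.T (p.η + 1) p.f ∧
  OrdClosed (VSet p.T) ∧
  (Order.IsSuccLimit p.η → p.η ∈ VSet p.T) ∧
  (∀ α, 0 < α → α ≤ p.η → ∀ t ∈ level p.T α, InF {τ | τ < θo ∧ MutExc t (p.f α τ)})

/-- `p ≤ q` in `𝕊^κ_𝐗` (and in `𝕊^κ_θ`): `p` end-extends `q` in both coordinates. -/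
def sext (θo : Ordinal) (p q : SCond) : Prop :=
  q.η ≤ p.η ∧
  (∀ t : PNode, t ∈ q.T ↔ (t ∈ p.T ∧ ∃ α, α ≤ q.η ∧ ndom t = Set.Iio α)) ∧
  (∀ α, α ≤ q.η → ∀ τ, τ < θo → p.f α τ = q.f α τ)

/-- Even ordinals (limit ordinals are even). -/
def EvenOrd (β : Ordinal) : Prop := ∃ γ : Ordinal, β = 2 * γ

/-- Player II has a winning strategy in the game `⅁_μ(P)`: she can choose conditions at all
even (incl. limit) stages `< μ`, only as a function of the previous moves, so that as long as
player I plays legally at odd stages, the resulting `μ`-sequence is decreasing. -/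
def WinningStratII {P : Type*} (le : P → P → Prop) (μ : Ordinal) : Prop :=
  ∃ σ : (β : Ordinal) → ({γ : Ordinal // γ < β} → P) → P,
    ∀ g : Ordinal → P,
      (∀ β, β < μ →
        (EvenOrd β → g β = σ β (fun γ => g γ.1)) ∧
        (¬ EvenOrd β → ∀ γ, γ < β → le (g β) (g γ))) →
      ∀ γ β, γ < β → β < μ → le (g β) (g γ)

/-!
If some `η_{T^β}` is largest, the condition at that index is already the limit. Otherwise
`E = sup η_{T^β}` is a limit ordinal, the union `U` of the trees `T^β` has height `E`, and the
unions `⋃_β f^β(η_{T^β})(τ)` and `z^γ(i) = ⋃_β z^β(i)` are nodes of height `E` (the *seeds*)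
all of whose restrictions lie in `U`. The new top level consists of all `x * b` with `x ∈ U`
and `b` a seed. Each such node equals `x' * b` with `x'` on the top level of some `T^β`, which
bounds the size of the level and gives the mutual exclusivity clause. The limits of the ascent
paths form the new ascent path. Finally `E` is a vanishing level: the restrictions of
`x * z^γ(γ)` form a branch through `x`, and `x * z^γ(γ)` is not on the top level, because
`z^β(γ)` is not `=*` to any `f^β(η_{T^β})(τ)` or any other `z^β(i)`.
-/

section Nodes

variable {s t x b w : PNode} {ν α a c : Ordinal}

lemma fst_mem_ndom {q : Ordinal × Ordinal} (h : q ∈ s) : q.1 ∈ ndom s := ⟨q.2, h⟩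

lemma mem_nstar {q : Ordinal × Ordinal} :
    q ∈ nstar s t ↔ (q ∈ s ∧ q.1 ∈ ndom t) ∨ (q ∈ t ∧ q.1 ∉ ndom s) := Iff.rfl

lemma mem_nstar_of_notMem_ndom {ε v : Ordinal} (hε : ε ∉ ndom s) :
    (ε, v) ∈ nstar s t ↔ (ε, v) ∈ t := by
  rw [mem_nstar]
  exact ⟨fun h => h.elim (fun h => absurd (fst_mem_ndom h.1) hε) And.left,
    fun h => Or.inr ⟨h, hε⟩⟩

lemma ndom_nstar (s t : PNode) : ndom (nstar s t) = ndom t := by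
  ext ε
  refine ⟨fun ⟨v, hv⟩ => ?_, fun ⟨v, hv⟩ => ?_⟩
  · rcases hv with ⟨-, h⟩ | ⟨h, -⟩
    exacts [h, ⟨v, h⟩]
  · by_cases hε : ε ∈ ndom s
    · obtain ⟨u, hu⟩ := hε
      exact ⟨u, Or.inl ⟨hu, v, hv⟩⟩
    · exact ⟨v, Or.inr ⟨hv, hε⟩⟩

lemma ndom_nrestrict (s : PNode) (α : Ordinal) : ndom (nrestrict s α) = ndom s ∩ Iio α := by
  ext ε
  exact ⟨fun ⟨v, hv, hlt⟩ => ⟨⟨v, hv⟩, hlt⟩, fun ⟨⟨v, hv⟩, hlt⟩ => ⟨v, hv, hlt⟩⟩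

lemma mem_nrestrict {q : Ordinal × Ordinal} : q ∈ nrestrict s α ↔ q ∈ s ∧ q.1 < α := Iff.rfl

lemma nrestrict_nrestrict (s : PNode) (h : a ≤ c) :
    nrestrict (nrestrict s c) a = nrestrict s a := by
  ext q
  exact ⟨fun ⟨⟨hq, _⟩, ha⟩ => ⟨hq, ha⟩, fun ⟨hq, ha⟩ => ⟨⟨hq, ha.trans_le h⟩, ha⟩⟩

lemma nrestrict_subset (s : PNode) (α : Ordinal) : nrestrict s α ⊆ s := fun _ hq => hq.1

lemma nstar_empty (t : PNode) : nstar ∅ t = t := by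
  ext q
  simp [mem_nstar, ndom]

lemma nstar_self (h : ndom s = ndom t) : nstar s t = s := by
  ext q
  rw [mem_nstar]
  exact ⟨fun hq => hq.elim And.left (fun hq => absurd (h ▸ fst_mem_ndom hq.1) hq.2),
    fun hq => Or.inl ⟨hq, h ▸ fst_mem_ndom hq⟩⟩

lemma subset_nstar (h : ndom s ⊆ ndom t) : s ⊆ nstar s t :=
  fun _ hq => Or.inl ⟨hq, h (fst_mem_ndom hq)⟩

lemma nrestrict_nstar (s t : PNode) (α : Ordinal) :
    nrestrict (nstar s t) α = nstar s (nrestrict t α) := by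
  ext q
  simp only [mem_nstar, mem_nrestrict, ndom_nrestrict, mem_inter_iff, mem_Iio]
  tauto

/-- Moves the part of `b` below `α` into the tree below `α`. -/
lemma nstar_nstar_nrestrict (hs : ndom s ⊆ Iio α) (hx : ndom x ⊆ Iio α) :
    nstar s (nstar x b) = nstar (nstar s (nstar x (nrestrict b α))) b := by
  ext q
  have hqb : q ∈ b → q.1 ∈ ndom b := fst_mem_ndom
  simp only [mem_nstar, mem_nrestrict, ndom_nstar, ndom_nrestrict, mem_inter_iff, mem_Iio]
  by_cases hα : q.1 < α
  · tauto
  · have hqs : q.1 ∉ ndom s := fun h => hα (hs h)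
    have hqx : q.1 ∉ ndom x := fun h => hα (hx h)
    have hqs' : q ∉ s := fun h => hqs (fst_mem_ndom h)
    have hqx' : q ∉ x := fun h => hqx (fst_mem_ndom h)
    tauto

lemma nstar_eq_nstar_nstar_nrestrict (hx : ndom x ⊆ Iio α) :
    nstar x b = nstar (nstar x (nrestrict b α)) b := by
  simpa only [nstar_empty] using
    nstar_nstar_nrestrict (s := ∅) (x := x) (b := b) (by simp [ndom]) hx

lemma IsNodeOf.ndom_eq (h : IsNodeOf ν α s) : ndom s = Iio α := by
  ext ε
  refine ⟨fun ⟨v, hv⟩ => (h.1 _ hv).1, fun hε => ?_⟩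
  obtain ⟨v, hv, -⟩ := h.2 ε hε
  exact ⟨v, hv⟩

lemma IsNodeOf.fst_lt (h : IsNodeOf ν α s) {q : Ordinal × Ordinal} (hq : q ∈ s) : q.1 < α :=
  (h.1 q hq).1

lemma IsNodeOf.eq_of_mem (h : IsNodeOf ν α s) {ε v w : Ordinal} (hv : (ε, v) ∈ s)
    (hw : (ε, w) ∈ s) : v = w := by
  obtain ⟨u, -, hu⟩ := h.2 ε (h.fst_lt hv)
  rw [hu v hv, hu w hw]

lemma IsNodeOf.mem_of_subset {t : PNode} (hs : IsNodeOf ν α s) (ht : IsNodeOf ν c t)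
    (hst : s ⊆ t) {q : Ordinal × Ordinal} (hq : q ∈ t) (hα : q.1 < α) : q ∈ s := by
  obtain ⟨ε, u⟩ := q
  obtain ⟨v, hv, -⟩ := hs.2 ε hα
  rwa [ht.eq_of_mem hq (hst hv)]

lemma IsNodeOf.eq_of_subset (hs : IsNodeOf ν α s) (ht : IsNodeOf ν α t) (h : s ⊆ t) :
    s = t :=
  h.antisymm fun _ hq => hs.mem_of_subset ht h hq (ht.fst_lt hq)

lemma IsNodeOf.subset_of_le (hs : IsNodeOf ν a s) (ht : IsNodeOf ν c t) (hac : a ≤ c)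
    (h : s ⊆ t ∨ t ⊆ s) : s ⊆ t := by
  refine h.elim id fun hts => ?_
  obtain rfl : a = c := hac.antisymm <| not_lt.1 fun hlt => by
    obtain ⟨v, hv, -⟩ := ht.2 a hlt
    exact (hs.fst_lt (hts hv)).false
  exact (ht.eq_of_subset hs hts).ge

lemma IsNodeOf.nrestrict_eq_self (h : IsNodeOf ν α s) (hα : α ≤ c) : nrestrict s c = s :=
  (nrestrict_subset s c).antisymm fun _ hq => ⟨hq, (h.fst_lt hq).trans_le hα⟩

lemma IsNodeOf.nstar_eq_nrestrict (hs : IsNodeOf ν c s) (ht : ndom t = Iio a) (hac : a ≤ c) :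
    nstar s t = nrestrict s a := by
  ext q
  rw [mem_nstar, mem_nrestrict, ht, mem_Iio]
  refine ⟨fun h => h.elim id fun ⟨hq, hqs⟩ => absurd ?_ hqs, Or.inl⟩
  rw [hs.ndom_eq]
  exact lt_of_lt_of_le (ht ▸ fst_mem_ndom hq : q.1 ∈ Iio a) hac

lemma IsNodeOf.nstar (hx : IsNodeOf ν a x) (hb : IsNodeOf ν c b) (hac : a ≤ c) :
    IsNodeOf ν c (nstar x b) := by
  refine ⟨fun q hq => hq.elim (fun hq => ?_) (fun hq => hb.1 q hq.1), fun ε hε => ?_⟩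
  · exact ⟨(hx.fst_lt hq.1).trans_le hac, (hx.1 q hq.1).2⟩
  by_cases hεx : ε ∈ ndom x
  · obtain ⟨v, hv⟩ := hεx
    refine ⟨v, Or.inl ⟨hv, hb.ndom_eq ▸ hε⟩, fun u hu => ?_⟩
    rcases hu with ⟨hu, -⟩ | ⟨-, hns⟩
    exacts [hx.eq_of_mem hu hv, absurd ⟨v, hv⟩ hns]
  · obtain ⟨v, hv, huniq⟩ := hb.2 ε hε
    exact ⟨v, (mem_nstar_of_notMem_ndom hεx).2 hv,
      fun u hu => huniq u ((mem_nstar_of_notMem_ndom hεx).1 hu)⟩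

lemma mutExc_of_isNodeOf_zero (h : IsNodeOf ν 0 s) : MutExc s t :=
  fun _ _ _ hv _ => absurd (h.fst_lt hv) zero_le.not_gt

lemma MutExc.nstar (hx : MutExc x t) (hb : MutExc b t) : MutExc (nstar x b) t := by
  rintro ε v w (⟨hv, -⟩ | ⟨hv, -⟩) hw
  exacts [hx ε v w hv hw, hb ε v w hv hw]

lemma MutExc.of_nrestrict (h : MutExc x (nrestrict t α)) (hx : ndom x ⊆ Iio α) : MutExc x t :=
  fun ε v w hv hw => h ε v w hv ⟨hw, hx ⟨v, hv⟩⟩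

lemma not_eqStar_of_mutExc (h : MutExc s t) : ¬ EqStar s t := by
  rintro ⟨-, α, ⟨v, hv⟩, hagree⟩
  exact h α v v hv ((hagree α le_rfl v).1 hv) rfl

lemma eqStar_nrestrict_of_nstar_eq {x' : PNode} (h : nstar x w = nstar x' b)
    (hx : ndom x ⊆ Iio a) (hx' : ndom x' ⊆ Iio a) (ha : a ∈ ndom w) (haα : a < α) :
    EqStar (nrestrict w α) (nrestrict b α) := by
  have hagree : ∀ ε, a ≤ ε → ∀ v, (ε, v) ∈ w ↔ (ε, v) ∈ b := by
    intro ε hε v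
    have hεx : ε ∉ ndom x := fun h => absurd hε (not_le.2 (hx h))
    have hεx' : ε ∉ ndom x' := fun h => absurd hε (not_le.2 (hx' h))
    rw [← mem_nstar_of_notMem_ndom hεx, h, mem_nstar_of_notMem_ndom hεx']
  have hdom : ndom w = ndom b := by rw [← ndom_nstar x w, h, ndom_nstar]
  refine ⟨by rw [ndom_nrestrict, ndom_nrestrict, hdom], a, ?_, fun ε hε v => ?_⟩
  · rw [ndom_nrestrict]
    exact ⟨ha, haα⟩
  · simp only [mem_nrestrict, hagree ε hε v]

end Nodes

section Chains

variable {ι : Type*} [LinearOrder ι] {Γ : Set ι} {h : ι → Ordinal} {s t : ι → PNode}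
  {ν E : Ordinal}

lemma isNodeOf_biUnion (hn : ∀ i ∈ Γ, IsNodeOf ν (h i) (s i)) (hs : MonotoneOn s Γ)
    (hle : ∀ i ∈ Γ, h i ≤ E) (hcof : ∀ a < E, ∃ i ∈ Γ, a < h i) :
    IsNodeOf ν E (⋃ i ∈ Γ, s i) := by
  refine ⟨fun q hq => ?_, fun ε hε => ?_⟩
  · obtain ⟨i, hi, hq⟩ := mem_iUnion₂.1 hq
    exact ⟨((hn i hi).fst_lt hq).trans_le (hle i hi), ((hn i hi).1 q hq).2⟩
  · obtain ⟨i, hi, hεi⟩ := hcof ε hε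
    obtain ⟨v, hv, -⟩ := (hn i hi).2 ε hεi
    refine ⟨v, mem_biUnion hi hv, fun u hu => ?_⟩
    obtain ⟨j, hj, hu⟩ := mem_iUnion₂.1 hu
    rcases le_total i j with hij | hij
    · exact (hn j hj).eq_of_mem hu (hs hi hj hij hv)
    · exact (hn i hi).eq_of_mem (hs hj hi hij hu) hv

lemma nrestrict_biUnion (hn : ∀ i ∈ Γ, IsNodeOf ν (h i) (s i)) (hs : MonotoneOn s Γ)
    {i : ι} (hi : i ∈ Γ) : nrestrict (⋃ j ∈ Γ, s j) (h i) = s i := by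
  refine Subset.antisymm (fun q ⟨hq, hqi⟩ => ?_)
    fun q hq => ⟨mem_biUnion hi hq, (hn i hi).fst_lt hq⟩
  obtain ⟨j, hj, hq⟩ := mem_iUnion₂.1 hq
  rcases le_total j i with hji | hij
  · exact hs hj hi hji hq
  · exact (hn i hi).mem_of_subset (hn j hj) (hs hi hj hij) hq hqi

lemma mutExc_biUnion (hs : MonotoneOn s Γ) (ht : MonotoneOn t Γ)
    (hst : ∀ i ∈ Γ, MutExc (s i) (t i)) : MutExc (⋃ i ∈ Γ, s i) (⋃ i ∈ Γ, t i) := by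
  intro ε v w hv hw
  obtain ⟨i, hi, hv⟩ := mem_iUnion₂.1 hv
  obtain ⟨j, hj, hw⟩ := mem_iUnion₂.1 hw
  rcases le_total i j with hij | hij
  · exact hst j hj ε v w (hs hi hj hij hv) hw
  · exact hst i hi ε v w hv (ht hj hi hij hw)

end Chains

structure IsFreeFilterPred (θo : Ordinal) (InF : Set Ordinal → Prop) : Prop where
  mono : ∀ {Y Y' : Set Ordinal}, InF Y → Y ⊆ Y' → InF Y'
  inter : ∀ {Y Y' : Set Ordinal}, InF Y → InF Y' → InF (Y ∩ Y')
  setOf_ne : ∀ τ₀, InF {τ | τ < θo ∧ τ ≠ τ₀}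

lemma isFreeFilterPred_inFX {θo ζ : Ordinal} {X : Ordinal → Set Ordinal}
    (hXsub : ∀ ξ, ξ < ζ → X ξ ⊆ Iio θo) (hXdec : ∀ ξ ξ', ξ ≤ ξ' → ξ' < ζ → X ξ' ⊆ X ξ)
    (hXint : (⋂ ξ ∈ Iio ζ, X ξ) = ∅) : IsFreeFilterPred θo (InFX ζ X) where
  mono := fun ⟨ξ, hξ, hY⟩ hYY => ⟨ξ, hξ, hY.trans hYY⟩
  inter := by
    rintro Y Y' ⟨ξ, hξ, hY⟩ ⟨ξ', hξ', hY'⟩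
    rcases le_total ξ ξ' with h | h
    · exact ⟨ξ', hξ', subset_inter ((hXdec ξ ξ' h hξ').trans hY) hY'⟩
    · exact ⟨ξ, hξ, subset_inter hY ((hXdec ξ' ξ h hξ).trans hY')⟩
  setOf_ne τ₀ := by
    obtain ⟨ξ, hξ, hτ₀⟩ : ∃ ξ < ζ, τ₀ ∉ X ξ := by
      by_contra! h
      have : τ₀ ∈ ⋂ ξ ∈ Iio ζ, X ξ := mem_iInter₂.2 h
      rwa [hXint] at this
    exact ⟨ξ, hξ, fun τ hτ => ⟨hXsub ξ hξ hτ, fun h => hτ₀ (h ▸ hτ)⟩⟩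

section Trees

variable {T : Set PNode} {s w x : PNode} {ν α a c E : Ordinal}

lemma ndom_nrestrict_of_le (hs : ndom s = Iio c) (ha : a ≤ c) : ndom (nrestrict s a) = Iio a := by
  rw [ndom_nrestrict, hs, Iio_inter_Iio, min_eq_right ha]

lemma nrestrict_zero (s : PNode) : nrestrict s 0 = ∅ :=
  eq_empty_of_forall_notMem fun _ hq => absurd hq.2 zero_le.not_gt

lemma ndom_empty : ndom ∅ = Iio 0 := by
  simp [ndom]

lemma IsStreamlined.empty_mem (hT : IsStreamlined T) (hne : T.Nonempty) : ∅ ∈ T := by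
  obtain ⟨t, ht⟩ := hne
  simpa only [nrestrict_zero] using hT t ht 0

lemma IsBranch.lt_of_ndom_eq {B : Set PNode} (hB : IsBranch T α B) (hx : x ∈ B)
    (hd : ndom x = Iio c) : c < α := by
  have : c ∈ {β | ∃ x ∈ B, ndom x = Iio β} := ⟨x, hx, hd⟩
  rwa [hB.2.2] at this

lemma IsBranch.ndom_sUnion {B : Set PNode} (hB : IsBranch T α B) (hα : Order.IsSuccLimit α)
    (hT : ∀ x ∈ T, ∃ c, ndom x = Iio c) : ndom (⋃₀ B) = Iio α := by
  ext ε
  constructor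
  · rintro ⟨v, x, hx, hv⟩
    obtain ⟨c, hc⟩ := hT x (hB.1 hx)
    have hεc : ε ∈ Iio c := hc ▸ ⟨v, hv⟩
    exact lt_trans hεc (hB.lt_of_ndom_eq hx hc)
  · intro hε
    have : Order.succ ε ∈ Iio α := hα.succ_lt hε
    rw [← hB.2.2] at this
    obtain ⟨x, hx, hd⟩ := this
    obtain ⟨v, hv⟩ : ε ∈ ndom x := hd ▸ Order.lt_succ ε
    exact ⟨v, x, hx, hv⟩

lemma mem_VSet_iff_of_endExtension {T' : Set PNode} {η : Ordinal}
    (hT : ∀ t, t ∈ T ↔ t ∈ T' ∧ ∃ α, α ≤ η ∧ ndom t = Iio α)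
    (hT' : ∀ t ∈ T', ∃ c, ndom t = Iio c) (ha : a ≤ η) : a ∈ VSet T ↔ a ∈ VSet T' := by
  have hsub : T ⊆ T' := fun t ht => ((hT t).1 ht).1
  have hlow : ∀ t ∈ T', ∀ c < a, ndom t = Iio c → t ∈ T :=
    fun t ht c hc hd => (hT t).2 ⟨ht, c, hc.le.trans ha, hd⟩
  have hbranch : ∀ B, IsBranch T a B ↔ IsBranch T' a B := by
    refine fun B => ⟨fun hB => ⟨hB.1.trans hsub, hB.2⟩, fun hB => ⟨fun x hx => ?_, hB.2⟩⟩
    obtain ⟨c, hc⟩ := hT' x (hB.1 hx)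
    exact hlow x (hB.1 hx) c (hB.lt_of_ndom_eq hx hc) hc
  constructor
  · rintro ⟨hlim, hV⟩
    refine ⟨hlim, fun x hx ⟨c, hc, hd⟩ => ?_⟩
    obtain ⟨B, hB, hxB, hU⟩ := hV x (hlow x hx c hc hd) ⟨c, hc, hd⟩
    refine ⟨B, (hbranch B).1 hB, hxB, fun hU' => hU ((hT _).2 ⟨hU', a, ha, ?_⟩)⟩
    exact hB.ndom_sUnion hlim fun t ht => hT' t (hsub ht)
  · rintro ⟨hlim, hV⟩
    refine ⟨hlim, fun x hx hxd => ?_⟩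
    obtain ⟨B, hB, hxB, hU⟩ := hV x (hsub hx) hxd
    exact ⟨B, (hbranch B).2 hB, hxB, fun hU' => hU (hsub hU')⟩

lemma VSet_subset_Iic (h0 : ∅ ∈ T) (hT : ∀ t ∈ T, ∃ c ≤ E, ndom t = Iio c) :
    VSet T ⊆ Iic E := by
  rintro v ⟨hlim, hV⟩
  by_contra hvE
  obtain ⟨B, hB, -, -⟩ := hV ∅ h0 ⟨0, hlim.bot_lt, ndom_empty⟩
  have hsucc : Order.succ E ∈ Iio v := hlim.succ_lt (not_le.1 hvE)
  rw [← hB.2.2] at hsucc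
  obtain ⟨x, hxB, hdx⟩ := hsucc
  obtain ⟨c, hcE, hdc⟩ := hT x (hB.1 hxB)
  rw [hdc, Iio_inj] at hdx
  exact (Order.lt_succ E).not_ge (hdx ▸ hcE)

/-- The vanishing branch through `x` is `⟨(x * w) ↾ a : a < E⟩`. -/
lemma mem_VSet_of_forall_nstar_notMem (hE : Order.IsSuccLimit E) (hT : UnifHomog T)
    (hw : ndom w = Iio E) (hres : ∀ a < E, nrestrict w a ∈ T)
    (hnot : ∀ x ∈ T, (∃ c < E, ndom x = Iio c) → nstar x w ∉ T) : E ∈ VSet T := by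
  refine ⟨hE, fun x hx hxd => ?_⟩
  obtain ⟨c, hc, hdx⟩ := hxd
  have hdxw : ndom (nstar x w) = Iio E := by rw [ndom_nstar, hw]
  refine ⟨nrestrict (nstar x w) '' Iio E, ⟨?_, ?_, ?_⟩, ⟨c, hc, ?_⟩, ?_⟩
  · rintro _ ⟨a, ha, rfl⟩
    rw [nrestrict_nstar]
    exact hT x hx _ (hres a ha)
  · have hmono : Monotone (nrestrict (nstar x w)) :=
      fun a a' h q hq => ⟨hq.1, hq.2.trans_le h⟩
    rintro _ ⟨a, -, rfl⟩ _ ⟨a', -, rfl⟩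
    exact (le_total a a').imp (fun h => hmono h) (fun h => hmono h)
  · ext c'
    constructor
    · rintro ⟨_, ⟨a, ha, rfl⟩, hd⟩
      rw [ndom_nrestrict_of_le hdxw ha.le, Iio_inj] at hd
      exact hd ▸ ha
    · exact fun hc' => ⟨_, ⟨c', hc', rfl⟩, ndom_nrestrict_of_le hdxw (le_of_lt hc')⟩
  · rw [nrestrict_nstar]
    exact nstar_self (by rw [hdx, ndom_nrestrict_of_le hw hc.le])
  · have hunion : ⋃₀ (nrestrict (nstar x w) '' Iio E) = nstar x w := by
      refine Subset.antisymm (sUnion_subset ?_) fun q hq => ?_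
      · rintro _ ⟨a, -, rfl⟩
        exact nrestrict_subset _ a
      · have hqE : q.1 ∈ Iio E := hdxw ▸ fst_mem_ndom hq
        exact ⟨_, ⟨_, hE.succ_lt hqE, rfl⟩, hq, Order.lt_succ q.1⟩
    rw [hunion]
    exact hnot x hx ⟨c, hc, hdx⟩

end Trees

def limitTree (U S : Set PNode) : Set PNode := U ∪ image2 nstar U S

structure IsSeedSet (ν E : Ordinal) (U S : Set PNode) : Prop where
  streamlined : IsStreamlined U
  unifHomog : UnifHomog U
  isNode : ∀ x ∈ U, ∃ a < E, IsNodeOf ν a x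
  seed_isNode : ∀ b ∈ S, IsNodeOf ν E b
  nrestrict_mem : ∀ b ∈ S, ∀ a < E, nrestrict b a ∈ U

namespace IsSeedSet

variable {ν E a : Ordinal} {U S : Set PNode} {y w : PNode}

lemma ndom_lt (H : IsSeedSet ν E U S) {x : PNode} (hx : x ∈ U) : ∃ a < E, ndom x = Iio a := by
  obtain ⟨a, ha, hn⟩ := H.isNode x hx
  exact ⟨a, ha, hn.ndom_eq⟩

lemma ndom_nstar_seed (H : IsSeedSet ν E U S) (x : PNode) {b : PNode} (hb : b ∈ S) :
    ndom (nstar x b) = Iio E := by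
  rw [ndom_nstar, (H.seed_isNode b hb).ndom_eq]

lemma isNode_limitTree (H : IsSeedSet ν E U S) (hy : y ∈ limitTree U S) :
    ∃ a ≤ E, IsNodeOf ν a y := by
  rcases hy with hy | ⟨x, hx, b, hb, rfl⟩
  · obtain ⟨a, ha, hn⟩ := H.isNode y hy
    exact ⟨a, ha.le, hn⟩
  · obtain ⟨a, ha, hn⟩ := H.isNode x hx
    exact ⟨E, le_rfl, hn.nstar (H.seed_isNode b hb) ha.le⟩

lemma mem_of_mem_limitTree (H : IsSeedSet ν E U S) (hy : y ∈ limitTree U S)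
    (hd : ndom y = Iio a) (ha : a < E) : y ∈ U := by
  rcases hy with hy | ⟨x, -, b, hb, rfl⟩
  · exact hy
  · rw [H.ndom_nstar_seed x hb, Iio_inj] at hd
    exact absurd ha (hd ▸ lt_irrefl a)

lemma level_limitTree_of_lt (H : IsSeedSet ν E U S) (ha : a < E) :
    level (limitTree U S) a = level U a := by
  ext t
  exact ⟨fun ⟨ht, hd⟩ => ⟨H.mem_of_mem_limitTree ht hd ha, hd⟩, fun ⟨ht, hd⟩ => ⟨Or.inl ht, hd⟩⟩

lemma level_limitTree_self (H : IsSeedSet ν E U S) :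
    level (limitTree U S) E = image2 nstar U S := by
  ext y
  refine ⟨fun ⟨hy, hd⟩ => ?_, fun hy => ⟨Or.inr hy, ?_⟩⟩
  · rcases hy with hy | hy
    · obtain ⟨a, ha, hda⟩ := H.ndom_lt hy
      rw [hda, Iio_inj] at hd
      exact absurd ha (hd ▸ lt_irrefl E)
    · exact hy
  · obtain ⟨x, -, b, hb, rfl⟩ := hy
    exact H.ndom_nstar_seed x hb

lemma isStreamlined_limitTree (H : IsSeedSet ν E U S) : IsStreamlined (limitTree U S) := by
  rintro t (ht | ⟨x, hx, b, hb, rfl⟩) a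
  · exact Or.inl (H.streamlined t ht a)
  rw [nrestrict_nstar]
  by_cases ha : a < E
  · exact Or.inl (H.unifHomog x hx _ (H.nrestrict_mem b hb a ha))
  · rw [(H.seed_isNode b hb).nrestrict_eq_self (not_lt.1 ha)]
    exact Or.inr (mem_image2_of_mem hx hb)

lemma unifHomog_limitTree (H : IsSeedSet ν E U S) : UnifHomog (limitTree U S) := by
  intro s hs t ht
  rcases ht with ht | ⟨x, hx, b, hb, rfl⟩
  · rcases hs with hs | ⟨xs, hxs, bs, hbs, rfl⟩
    · exact Or.inl (H.unifHomog s hs t ht)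
    · obtain ⟨a, ha, hda⟩ := H.ndom_lt ht
      obtain ⟨a', ha', hxs'⟩ := H.isNode xs hxs
      rw [(hxs'.nstar (H.seed_isNode bs hbs) ha'.le).nstar_eq_nrestrict hda ha.le]
      exact H.isStreamlined_limitTree _ (Or.inr (mem_image2_of_mem hxs hbs)) a
  · rcases hs with hs | ⟨xs, hxs, bs, hbs, rfl⟩
    · obtain ⟨a, ha, hda⟩ := H.ndom_lt hs
      obtain ⟨a', ha', hda'⟩ := H.ndom_lt hx
      have hmax : max a a' < E := max_lt ha ha'
      rw [nstar_nstar_nrestrict (α := max a a') (hda ▸ Iio_subset_Iio (le_max_left a a'))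
        (hda' ▸ Iio_subset_Iio (le_max_right a a'))]
      refine Or.inr (mem_image2_of_mem (H.unifHomog s hs _ ?_) hb)
      exact H.unifHomog x hx _ (H.nrestrict_mem b hb _ hmax)
    · rw [nstar_self (by rw [H.ndom_nstar_seed xs hbs, H.ndom_nstar_seed x hb])]
      exact Or.inr (mem_image2_of_mem hxs hbs)

lemma isNormalOfHeight_limitTree (H : IsSeedSet ν E U S) {b₀ : PNode} (hb₀ : b₀ ∈ S) :
    IsNormalOfHeight (limitTree U S) (E + 1) := by
  intro x hx a ha
  have haE : a ≤ E := Order.lt_add_one_iff.1 ha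
  obtain ⟨c, -, hxn⟩ := H.isNode_limitTree hx
  rcases le_or_gt a c with hac | hca
  · exact ⟨nrestrict x a, ⟨H.isStreamlined_limitTree x hx a, ndom_nrestrict_of_le hxn.ndom_eq hac⟩,
      Or.inr (nrestrict_subset x a)⟩
  have hxU : x ∈ U := H.mem_of_mem_limitTree hx hxn.ndom_eq (hca.trans_le haE)
  have hb₀n := H.seed_isNode b₀ hb₀
  rcases haE.eq_or_lt with rfl | haE
  · refine ⟨nstar x b₀, H.level_limitTree_self ▸ mem_image2_of_mem hxU hb₀, Or.inl ?_⟩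
    exact subset_nstar (by rw [hxn.ndom_eq, hb₀n.ndom_eq]; exact Iio_subset_Iio hca.le)
  · have hdr := ndom_nrestrict_of_le hb₀n.ndom_eq haE.le
    refine ⟨nstar x (nrestrict b₀ a), ⟨Or.inl ?_, by rw [ndom_nstar, hdr]⟩, Or.inl ?_⟩
    · exact H.unifHomog x hxU _ (H.nrestrict_mem b₀ hb₀ a haE)
    · exact subset_nstar (by rw [hxn.ndom_eq, hdr]; exact Iio_subset_Iio hca.le)

lemma mem_VSet_limitTree (H : IsSeedSet ν E U S) (hE : Order.IsSuccLimit E)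
    (hw : ndom w = Iio E) (hres : ∀ a < E, nrestrict w a ∈ U)
    (hnot : ∀ x ∈ U, nstar x w ∉ limitTree U S) : E ∈ VSet (limitTree U S) :=
  mem_VSet_of_forall_nstar_notMem hE H.unifHomog_limitTree hw
    (fun a ha => Or.inl (hres a ha))
    fun x hx ⟨_, hc, hd⟩ => hnot x (H.mem_of_mem_limitTree hx hd hc)

lemma VSet_limitTree_subset (H : IsSeedSet ν E U S) (hne : U.Nonempty) :
    VSet (limitTree U S) ⊆ Iic E :=
  VSet_subset_Iic (Or.inl (H.streamlined.empty_mem hne)) fun t ht => by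
    obtain ⟨a, ha, hn⟩ := H.isNode_limitTree ht
    exact ⟨a, ha, hn.ndom_eq⟩

end IsSeedSet

namespace IsSCondX

variable {κ : Cardinal} {θo : Ordinal} {InF : Set Ordinal → Prop} {p : SCond} {t : PNode}
  {a a' τ τ' : Ordinal}

lemma isNode (h : IsSCondX κ θo InF p) (ht : t ∈ p.T) : ∃ α ≤ p.η, IsNodeOf κ.ord α t :=
  h.1 t ht

lemma ndom_eq (h : IsSCondX κ θo InF p) (ht : t ∈ p.T) : ∃ α ≤ p.η, ndom t = Iio α := by
  obtain ⟨α, hα, hn⟩ := h.isNode ht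
  exact ⟨α, hα, hn.ndom_eq⟩

lemma isNode_of_mem_level (h : IsSCondX κ θo InF p) (ht : t ∈ level p.T a) :
    IsNodeOf κ.ord a t := by
  obtain ⟨α, -, hn⟩ := h.isNode ht.1
  rwa [Iio_inj.1 (hn.ndom_eq.symm.trans ht.2)] at hn

lemma streamlined (h : IsSCondX κ θo InF p) : IsStreamlined p.T := h.2.1

lemma unifHomog (h : IsSCondX κ θo InF p) : UnifHomog p.T := h.2.2.1

lemma level_nonempty (h : IsSCondX κ θo InF p) (ha : a ≤ p.η) : (level p.T a).Nonempty :=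
  h.2.2.2.2.1 a ha

lemma card_level_lt (h : IsSCondX κ θo InF p) (ha : a ≤ p.η) :
    Cardinal.mk (level p.T a) < Cardinal.lift.{1} κ :=
  h.2.2.2.2.2.1 a ha

lemma f_mem_level (h : IsSCondX κ θo InF p) (ha : a ≤ p.η) (hτ : τ < θo) :
    p.f a τ ∈ level p.T a :=
  h.2.2.2.2.2.2.1.1 a (Order.lt_add_one_iff.2 ha) τ hτ

lemma isNode_f (h : IsSCondX κ θo InF p) (ha : a ≤ p.η) (hτ : τ < θo) :
    IsNodeOf κ.ord a (p.f a τ) :=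
  h.isNode_of_mem_level (h.f_mem_level ha hτ)

lemma inF_supp (h : IsSCondX κ θo InF p) (haa' : a < a') (ha' : a' ≤ p.η) :
    InF (supp θo (p.f a) (p.f a')) :=
  h.2.2.2.2.2.2.1.2.1 a a' haa' (Order.lt_add_one_iff.2 ha')

lemma mutExc_f (h : IsSCondX κ θo InF p) (ha : a ≤ p.η) (hτ : τ < θo) (hτ' : τ' < θo)
    (hne : τ ≠ τ') : MutExc (p.f a τ) (p.f a τ') := by
  rcases eq_zero_or_pos a with rfl | ha0
  · exact mutExc_of_isNodeOf_zero (h.isNode_f ha hτ)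
  · exact h.2.2.2.2.2.2.1.2.2 a ha0 (Order.lt_add_one_iff.2 ha) τ τ' hτ hτ' hne

lemma ordClosed_VSet (h : IsSCondX κ θo InF p) : OrdClosed (VSet p.T) := h.2.2.2.2.2.2.2.1

lemma inF_mutExc (h : IsSCondX κ θo InF p) (ha0 : 0 < a) (ha : a ≤ p.η)
    (ht : t ∈ level p.T a) : InF {τ | τ < θo ∧ MutExc t (p.f a τ)} :=
  h.2.2.2.2.2.2.2.2.2 a ha0 ha t ht

end IsSCondX

namespace sext

variable {θo : Ordinal} {p q : SCond} {t : PNode} {a : Ordinal}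

lemma T_subset (h : sext θo p q) : q.T ⊆ p.T := fun t ht => ((h.2.1 t).1 ht).1

lemma mem_of_ndom_eq (h : sext θo p q) (ht : t ∈ p.T) (hd : ndom t = Iio a) (ha : a ≤ q.η) :
    t ∈ q.T :=
  (h.2.1 t).2 ⟨ht, a, ha, hd⟩

lemma symm_of_eta_eq (h : sext θo p q) (hη : p.η = q.η)
    (hp : ∀ t ∈ p.T, ∃ α ≤ p.η, ndom t = Iio α) : sext θo q p := by
  refine ⟨hη.le, fun t => ⟨fun ht => ?_, fun ht => h.T_subset ht.1⟩,
    fun a ha τ hτ => (h.2.2 a (hη ▸ ha) τ hτ).symm⟩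
  obtain ⟨α, hα, hd⟩ := hp t ht
  exact ⟨h.mem_of_ndom_eq ht hd (hη ▸ hα), α, hα, hd⟩

end sext

structure LimitData (κ : Cardinal) (θo : Ordinal) (InF : Set Ordinal → Prop)
    (γ δ : Ordinal.{0}) (Γ : Set Ordinal.{0}) (p : Ordinal → SCond)
    (z : Ordinal → Ordinal → PNode) : Prop where
  filter : IsFreeFilterPred θo InF
  theta_pos : 0 < θo
  nonempty : Γ.Nonempty
  lt : ∀ β ∈ Γ, β < γ
  cond : ∀ β ∈ Γ, IsSCondX κ θo InF (p β)
  dec : ∀ α ∈ Γ, ∀ β ∈ Γ, α ≤ β → sext θo (p β) (p α)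
  ztop : ∀ β ∈ Γ, ∀ i, β < i → i < δ → z β i ∈ level (p β).T (p β).η
  zdist : ∀ β ∈ Γ, ∀ i, β < i → i < δ → ∀ i', β < i' → i' < δ → i' ≠ i →
    ¬ EqStar (z β i) (z β i')
  zf0 : ∀ β ∈ Γ, ∀ i, β < i → i < δ → ¬ EqStar (z β i) ((p β).f (p β).η 0)
  zme : ∀ β ∈ Γ, ∀ i, β < i → i < δ → ∀ τ, 0 < τ → τ < θo →
    MutExc (z β i) ((p β).f (p β).η τ)
  supp_top : ∀ α ∈ Γ, ∀ β ∈ Γ, supp θo ((p α).f (p α).η) ((p β).f (p β).η) = Iio θo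
  zmono : ∀ α ∈ Γ, ∀ β ∈ Γ, ∀ i, α < β → β < i → i < δ → z α i ⊆ z β i

def supEta (Γ : Set Ordinal) (p : Ordinal → SCond) : Ordinal := sSup ((fun β => (p β).η) '' Γ)

def topUnion (Γ : Set Ordinal) (p : Ordinal → SCond) (τ : Ordinal) : PNode :=
  ⋃ β ∈ Γ, (p β).f (p β).η τ

def zUnion (Γ : Set Ordinal) (z : Ordinal → Ordinal → PNode) (i : Ordinal) : PNode :=
  ⋃ β ∈ Γ, z β i

def treeUnion (Γ : Set Ordinal) (p : Ordinal → SCond) : Set PNode := ⋃ β ∈ Γ, (p β).T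

def seeds (θo γ δ : Ordinal) (Γ : Set Ordinal) (p : Ordinal → SCond)
    (z : Ordinal → Ordinal → PNode) : Set PNode :=
  topUnion Γ p '' Iio θo ∪ zUnion Γ z '' Ioo γ δ

/-- Below the top level, the `f^β` with `a ≤ η_{T^β}` all agree at `a`, so the union is their
common value. -/
def limitPath (Γ : Set Ordinal) (p : Ordinal → SCond) (a τ : Ordinal) : PNode :=
  if a < supEta Γ p then ⋃ β ∈ {β ∈ Γ | a ≤ (p β).η}, (p β).f a τ else topUnion Γ p τ

def limitCond (θo γ δ : Ordinal) (Γ : Set Ordinal) (p : Ordinal → SCond)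
    (z : Ordinal → Ordinal → PNode) : SCond :=
  ⟨limitTree (treeUnion Γ p) (seeds θo γ δ Γ p z), limitPath Γ p, supEta Γ p⟩

def IsLimitExtension (κ : Cardinal) (θo : Ordinal) (InF : Set Ordinal → Prop) (γ δ : Ordinal)
    (Γ : Set Ordinal) (p : Ordinal → SCond) (z : Ordinal → Ordinal → PNode) (q : SCond)
    (zg : Ordinal → PNode) : Prop :=
  IsSCondX κ θo InF q ∧
  q.η = supEta Γ p ∧
  (∀ i, γ < i → i < δ → (zg i = ⋃ β ∈ Γ, z β i) ∧ zg i ∈ q.T) ∧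
  (∀ β ∈ Γ, sext θo q (p β) ∧ supp θo ((p β).f (p β).η) (q.f q.η) = Iio θo) ∧
  (∀ y : PNode, IsNodeOf κ.ord q.η y →
    (y ∈ q.T ↔
      ∃ x, (∃ β ∈ Γ, x ∈ (p β).T) ∧
        ((∃ τ, τ < θo ∧ y = nstar x (q.f q.η τ)) ∨
         (∃ i, γ < i ∧ i < δ ∧ y = nstar x (zg i)))))

namespace LimitData

variable {κ : Cardinal} {θo : Ordinal} {InF : Set Ordinal → Prop} {γ δ : Ordinal.{0}}
  {Γ : Set Ordinal.{0}} {p : Ordinal → SCond} {z : Ordinal → Ordinal → PNode}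
  {β β' a i τ : Ordinal} {t x y b : PNode}

lemma eta_mono (H : LimitData κ θo InF γ δ Γ p z) (hβ : β ∈ Γ) (hβ' : β' ∈ Γ) (h : β ≤ β') :
    (p β).η ≤ (p β').η :=
  (H.dec β hβ β' hβ' h).1

lemma T_mono (H : LimitData κ θo InF γ δ Γ p z) (hβ : β ∈ Γ) (hβ' : β' ∈ Γ) (h : β ≤ β') :
    (p β).T ⊆ (p β').T :=
  (H.dec β hβ β' hβ' h).T_subset

lemma mem_T_of_ndom_eq (H : LimitData κ θo InF γ δ Γ p z) (hβ : β ∈ Γ) (hβ' : β' ∈ Γ)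
    (ht : t ∈ (p β').T) (hd : ndom t = Iio a) (ha : a ≤ (p β).η) : t ∈ (p β).T := by
  rcases le_total β' β with h | h
  · exact H.T_mono hβ' hβ h ht
  · exact (H.dec β hβ β' hβ' h).mem_of_ndom_eq ht hd ha

lemma f_eq (H : LimitData κ θo InF γ δ Γ p z) (hβ : β ∈ Γ) (hβ' : β' ∈ Γ) (ha : a ≤ (p β).η)
    (ha' : a ≤ (p β').η) (hτ : τ < θo) : (p β).f a τ = (p β').f a τ := by
  rcases le_total β β' with h | h
  · exact ((H.dec β hβ β' hβ' h).2.2 a ha τ hτ).symm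
  · exact (H.dec β' hβ' β hβ h).2.2 a ha' τ hτ

lemma eta_le_supEta (H : LimitData κ θo InF γ δ Γ p z) (hβ : β ∈ Γ) :
    (p β).η ≤ supEta Γ p := by
  have : Small.{0} Γ := small_subset (s := Iio γ) fun β hβ => H.lt β hβ
  exact le_csSup Ordinal.bddAbove_of_small (mem_image_of_mem _ hβ)

lemma exists_lt_eta (H : LimitData κ θo InF γ δ Γ p z) (ha : a < supEta Γ p) :
    ∃ β ∈ Γ, a < (p β).η := by
  obtain ⟨_, ⟨β, hβ, rfl⟩, h⟩ := exists_lt_of_lt_csSup (H.nonempty.image _) ha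
  exact ⟨β, hβ, h⟩

lemma z_mem_level (H : LimitData κ θo InF γ δ Γ p z) (hβ : β ∈ Γ) (hi : γ ≤ i) (hiδ : i < δ) :
    z β i ∈ level (p β).T (p β).η :=
  H.ztop β hβ i ((H.lt β hβ).trans_le hi) hiδ

lemma isNode_z (H : LimitData κ θo InF γ δ Γ p z) (hβ : β ∈ Γ) (hi : γ ≤ i) (hiδ : i < δ) :
    IsNodeOf κ.ord (p β).η (z β i) :=
  (H.cond β hβ).isNode_of_mem_level (H.z_mem_level hβ hi hiδ)

lemma monotoneOn_top (H : LimitData κ θo InF γ δ Γ p z) (hτ : τ < θo) :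
    MonotoneOn (fun β => (p β).f (p β).η τ) Γ := by
  intro β hβ β' hβ' h
  have hcomp : τ ∈ supp θo ((p β).f (p β).η) ((p β').f (p β').η) := by
    rw [H.supp_top β hβ β' hβ']
    exact hτ
  exact ((H.cond β hβ).isNode_f le_rfl hτ).subset_of_le ((H.cond β' hβ').isNode_f le_rfl hτ)
    (H.eta_mono hβ hβ' h) hcomp.2

lemma monotoneOn_z (H : LimitData κ θo InF γ δ Γ p z) (hi : γ ≤ i) (hiδ : i < δ) :
    MonotoneOn (fun β => z β i) Γ := by
  intro β hβ β' hβ' h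
  rcases h.eq_or_lt with rfl | h
  · exact le_rfl
  · exact H.zmono β hβ β' hβ' i h ((H.lt β' hβ').trans_le hi) hiδ

lemma isNode_topUnion (H : LimitData κ θo InF γ δ Γ p z) (hτ : τ < θo) :
    IsNodeOf κ.ord (supEta Γ p) (topUnion Γ p τ) :=
  isNodeOf_biUnion (fun β hβ => (H.cond β hβ).isNode_f le_rfl hτ) (H.monotoneOn_top hτ)
    (fun _ hβ => H.eta_le_supEta hβ) fun _ ha => H.exists_lt_eta ha

lemma nrestrict_topUnion (H : LimitData κ θo InF γ δ Γ p z) (hτ : τ < θo) (hβ : β ∈ Γ) :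
    nrestrict (topUnion Γ p τ) (p β).η = (p β).f (p β).η τ :=
  nrestrict_biUnion (fun β hβ => (H.cond β hβ).isNode_f le_rfl hτ) (H.monotoneOn_top hτ) hβ

lemma isNode_zUnion (H : LimitData κ θo InF γ δ Γ p z) (hi : γ ≤ i) (hiδ : i < δ) :
    IsNodeOf κ.ord (supEta Γ p) (zUnion Γ z i) :=
  isNodeOf_biUnion (fun _ hβ => H.isNode_z hβ hi hiδ) (H.monotoneOn_z hi hiδ)
    (fun _ hβ => H.eta_le_supEta hβ) fun _ ha => H.exists_lt_eta ha

lemma nrestrict_zUnion (H : LimitData κ θo InF γ δ Γ p z) (hi : γ ≤ i) (hiδ : i < δ)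
    (hβ : β ∈ Γ) : nrestrict (zUnion Γ z i) (p β).η = z β i :=
  nrestrict_biUnion (fun _ hβ => H.isNode_z hβ hi hiδ) (H.monotoneOn_z hi hiδ) hβ

lemma isLimitExtension_of_isMax (H : LimitData κ θo InF γ δ Γ p z) {β₀ : Ordinal}
    (hβ₀ : β₀ ∈ Γ) (hmax : ∀ β ∈ Γ, (p β).η ≤ (p β₀).η) :
    IsLimitExtension κ θo InF γ δ Γ p z (p β₀) (zUnion Γ z) := by
  have hE : supEta Γ p = (p β₀).η := by
    refine le_antisymm (csSup_le (H.nonempty.image _) ?_) (H.eta_le_supEta hβ₀)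
    rintro _ ⟨β, hβ, rfl⟩
    exact hmax β hβ
  have hz : ∀ i, γ ≤ i → i < δ → zUnion Γ z i = z β₀ i := fun i hi hiδ => by
    rw [← H.nrestrict_zUnion hi hiδ hβ₀, (H.isNode_zUnion hi hiδ).nrestrict_eq_self hE.le]
  have hT : ∀ β ∈ Γ, (p β).T ⊆ (p β₀).T := fun β hβ t ht => by
    obtain ⟨α, hα, hd⟩ := (H.cond β hβ).ndom_eq ht
    exact H.mem_T_of_ndom_eq hβ₀ hβ ht hd (hα.trans (hmax β hβ))
  have hcond₀ := H.cond β₀ hβ₀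
  refine ⟨hcond₀, hE.symm, fun i hi hiδ => ⟨rfl, ?_⟩,
    fun β hβ => ⟨?_, H.supp_top β hβ β₀ hβ₀⟩, fun y hy => ⟨fun hyT => ?_, ?_⟩⟩
  · rw [hz i hi.le hiδ]
    exact (H.z_mem_level hβ₀ hi.le hiδ).1
  · rcases le_total β β₀ with h | h
    · exact H.dec β hβ β₀ hβ₀ h
    · exact (H.dec β₀ hβ₀ β hβ h).symm_of_eta_eq ((hmax β hβ).antisymm (H.eta_mono hβ₀ hβ h))
        fun t ht => (H.cond β hβ).ndom_eq ht
  · refine ⟨y, ⟨β₀, hβ₀, hyT⟩, Or.inl ⟨0, H.theta_pos, (nstar_self ?_).symm⟩⟩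
    rw [hy.ndom_eq, (hcond₀.f_mem_level le_rfl H.theta_pos).2]
  · rintro ⟨x, ⟨β, hβ, hx⟩, ⟨τ, hτ, rfl⟩ | ⟨i, hi, hiδ, rfl⟩⟩
    · exact hcond₀.unifHomog x (hT β hβ hx) _ (hcond₀.f_mem_level le_rfl hτ).1
    · rw [hz i hi.le hiδ]
      exact hcond₀.unifHomog x (hT β hβ hx) _ (H.z_mem_level hβ₀ hi.le hiδ).1

lemma treeUnion_nonempty (H : LimitData κ θo InF γ δ Γ p z) : (treeUnion Γ p).Nonempty := by
  obtain ⟨β, hβ⟩ := H.nonempty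
  obtain ⟨t, ht⟩ := (H.cond β hβ).level_nonempty le_rfl
  exact ⟨t, mem_biUnion hβ ht.1⟩

lemma mem_T_of_mem_treeUnion (H : LimitData κ θo InF γ δ Γ p z) (hx : x ∈ treeUnion Γ p)
    (hβ : β ∈ Γ) (hd : ndom x = Iio a) (ha : a ≤ (p β).η) : x ∈ (p β).T := by
  obtain ⟨β', hβ', hx⟩ := mem_iUnion₂.1 hx
  exact H.mem_T_of_ndom_eq hβ hβ' hx hd ha

lemma isNode_of_mem_seeds (H : LimitData κ θo InF γ δ Γ p z) (hb : b ∈ seeds θo γ δ Γ p z) :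
    IsNodeOf κ.ord (supEta Γ p) b := by
  rcases hb with ⟨τ, hτ, rfl⟩ | ⟨i, hi, rfl⟩
  exacts [H.isNode_topUnion hτ, H.isNode_zUnion hi.1.le hi.2]

lemma nrestrict_mem_level_of_mem_seeds (H : LimitData κ θo InF γ δ Γ p z)
    (hb : b ∈ seeds θo γ δ Γ p z) (hβ : β ∈ Γ) :
    nrestrict b (p β).η ∈ level (p β).T (p β).η := by
  rcases hb with ⟨τ, hτ, rfl⟩ | ⟨i, hi, rfl⟩
  · rw [H.nrestrict_topUnion hτ hβ]
    exact (H.cond β hβ).f_mem_level le_rfl hτ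
  · rw [H.nrestrict_zUnion hi.1.le hi.2 hβ]
    exact H.z_mem_level hβ hi.1.le hi.2

lemma nrestrict_mem_treeUnion (H : LimitData κ θo InF γ δ Γ p z)
    (hb : ∀ β ∈ Γ, nrestrict b (p β).η ∈ (p β).T) (ha : a < supEta Γ p) :
    nrestrict b a ∈ treeUnion Γ p := by
  obtain ⟨β, hβ, haβ⟩ := H.exists_lt_eta ha
  rw [← nrestrict_nrestrict b haβ.le]
  exact mem_biUnion hβ ((H.cond β hβ).streamlined _ (hb β hβ) a)

lemma isSuccLimit_supEta (H : LimitData κ θo InF γ δ Γ p z)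
    (hlt : ∀ β ∈ Γ, (p β).η < supEta Γ p) : Order.IsSuccLimit (supEta Γ p) := by
  obtain ⟨β, hβ⟩ := H.nonempty
  refine Ordinal.isSuccLimit_iff.2 ⟨(zero_le.trans_lt (hlt β hβ)).ne',
    Order.isSuccPrelimit_of_succ_lt fun a ha => ?_⟩
  obtain ⟨β, hβ, h⟩ := H.exists_lt_eta ha
  exact (Order.succ_le_of_lt h).trans_lt (hlt β hβ)

lemma isSeedSet (H : LimitData κ θo InF γ δ Γ p z) (hlt : ∀ β ∈ Γ, (p β).η < supEta Γ p) :
    IsSeedSet κ.ord (supEta Γ p) (treeUnion Γ p) (seeds θo γ δ Γ p z) where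
  streamlined t ht a := by
    obtain ⟨β, hβ, ht⟩ := mem_iUnion₂.1 ht
    exact mem_biUnion hβ ((H.cond β hβ).streamlined t ht a)
  unifHomog s hs t ht := by
    obtain ⟨β, hβ, hs⟩ := mem_iUnion₂.1 hs
    obtain ⟨β', hβ', ht⟩ := mem_iUnion₂.1 ht
    rcases le_total β β' with h | h
    · exact mem_biUnion hβ' ((H.cond β' hβ').unifHomog s (H.T_mono hβ hβ' h hs) t ht)
    · exact mem_biUnion hβ ((H.cond β hβ).unifHomog s hs t (H.T_mono hβ' hβ h ht))
  isNode x hx := by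
    obtain ⟨β, hβ, hx⟩ := mem_iUnion₂.1 hx
    obtain ⟨α, hα, hn⟩ := (H.cond β hβ).isNode hx
    exact ⟨α, hα.trans_lt (hlt β hβ), hn⟩
  seed_isNode _ hb := H.isNode_of_mem_seeds hb
  nrestrict_mem _ hb _ ha :=
    H.nrestrict_mem_treeUnion (fun _ hβ => (H.nrestrict_mem_level_of_mem_seeds hb hβ).1) ha

lemma limitPath_of_le (H : LimitData κ θo InF γ δ Γ p z) (hlt : ∀ β ∈ Γ, (p β).η < supEta Γ p)
    (hβ : β ∈ Γ) (ha : a ≤ (p β).η) (hτ : τ < θo) : limitPath Γ p a τ = (p β).f a τ := by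
  rw [limitPath, if_pos (ha.trans_lt (hlt β hβ))]
  exact Subset.antisymm (iUnion₂_subset fun β' hβ' => (H.f_eq hβ'.1 hβ hβ'.2 ha hτ).le)
    (subset_biUnion_of_mem (u := fun β' => (p β').f a τ) ⟨hβ, ha⟩)

lemma level_limitTree_of_le (H : LimitData κ θo InF γ δ Γ p z)
    (hlt : ∀ β ∈ Γ, (p β).η < supEta Γ p) (hβ : β ∈ Γ) (ha : a ≤ (p β).η) :
    level (limitTree (treeUnion Γ p) (seeds θo γ δ Γ p z)) a = level (p β).T a := by
  rw [(H.isSeedSet hlt).level_limitTree_of_lt (ha.trans_lt (hlt β hβ))]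
  ext t
  exact ⟨fun ⟨ht, hd⟩ => ⟨H.mem_T_of_mem_treeUnion ht hβ hd ha, hd⟩,
    fun ⟨ht, hd⟩ => ⟨mem_biUnion hβ ht, hd⟩⟩

lemma sext_limitCond (H : LimitData κ θo InF γ δ Γ p z) (hlt : ∀ β ∈ Γ, (p β).η < supEta Γ p)
    (hβ : β ∈ Γ) : sext θo (limitCond θo γ δ Γ p z) (p β) := by
  refine ⟨H.eta_le_supEta hβ, fun t => ⟨fun ht => ?_, fun ⟨ht, a, ha, hd⟩ => ?_⟩,
    fun a ha τ hτ => H.limitPath_of_le hlt hβ ha hτ⟩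
  · obtain ⟨α, hα, hd⟩ := (H.cond β hβ).ndom_eq ht
    exact ⟨Or.inl (mem_biUnion hβ ht), α, hα, hd⟩
  · exact H.mem_T_of_mem_treeUnion
      ((H.isSeedSet hlt).mem_of_mem_limitTree ht hd (ha.trans_lt (hlt β hβ))) hβ hd ha

lemma exists_eq_nstar_of_mem_level_supEta (H : LimitData κ θo InF γ δ Γ p z)
    (hlt : ∀ β ∈ Γ, (p β).η < supEta Γ p)
    (hy : y ∈ level (limitTree (treeUnion Γ p) (seeds θo γ δ Γ p z)) (supEta Γ p)) :
    ∃ β ∈ Γ, ∃ x ∈ level (p β).T (p β).η, ∃ b ∈ seeds θo γ δ Γ p z, y = nstar x b := by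
  rw [(H.isSeedSet hlt).level_limitTree_self] at hy
  obtain ⟨x, hx, b, hb, rfl⟩ := hy
  obtain ⟨β, hβ, hx⟩ := mem_iUnion₂.1 hx
  obtain ⟨α, hα, hd⟩ := (H.cond β hβ).ndom_eq hx
  have hbβ := H.nrestrict_mem_level_of_mem_seeds hb hβ
  refine ⟨β, hβ, nstar x (nrestrict b (p β).η),
    ⟨(H.cond β hβ).unifHomog x hx _ hbβ.1, by rw [ndom_nstar, hbβ.2]⟩, b, hb, ?_⟩
  exact nstar_eq_nstar_nstar_nrestrict (hd ▸ Iio_subset_Iio hα)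

lemma card_seeds_lt (hκ : κ.IsRegular) (hθ : θo < κ.ord) (hδ : δ < κ.ord) :
    Cardinal.mk (seeds θo γ δ Γ p z) < Cardinal.lift.{1} κ := by
  refine (Cardinal.mk_union_le _ _).trans_lt
    (Cardinal.add_lt_of_lt hκ.lift.aleph0_le ?_ ?_) <;> refine Cardinal.mk_image_le.trans_lt ?_
  · rw [Cardinal.mk_Iio_ordinal]
    exact Cardinal.lift_lt.2 (Cardinal.lt_ord.1 hθ)
  · refine (Cardinal.mk_le_mk_of_subset Ioo_subset_Iio_self).trans_lt ?_
    rw [Cardinal.mk_Iio_ordinal]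
    exact Cardinal.lift_lt.2 (Cardinal.lt_ord.1 hδ)

lemma card_level_supEta_lt (H : LimitData κ θo InF γ δ Γ p z)
    (hlt : ∀ β ∈ Γ, (p β).η < supEta Γ p) (hκ : κ.IsRegular) (hθ : θo < κ.ord)
    (hγδ : γ < δ) (hδ : δ < κ.ord) :
    Cardinal.mk (level (limitTree (treeUnion Γ p) (seeds θo γ δ Γ p z)) (supEta Γ p)) <
      Cardinal.lift.{1} κ := by
  have hsub : level (limitTree (treeUnion Γ p) (seeds θo γ δ Γ p z)) (supEta Γ p) ⊆
      ⋃ β : Γ, image2 nstar (level (p β).T (p β).η) (seeds θo γ δ Γ p z) := by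
    intro y hy
    obtain ⟨β, hβ, x, hx, b, hb, rfl⟩ := H.exists_eq_nstar_of_mem_level_supEta hlt hy
    exact mem_iUnion.2 ⟨⟨β, hβ⟩, mem_image2_of_mem hx hb⟩
  have hΓ : Cardinal.mk Γ < Cardinal.lift.{1} κ := by
    refine (Cardinal.mk_le_mk_of_subset (t := Iio δ) fun β hβ => (H.lt β hβ).trans hγδ).trans_lt ?_
    rw [Cardinal.mk_Iio_ordinal]
    exact Cardinal.lift_lt.2 (Cardinal.lt_ord.1 hδ)
  refine (Cardinal.mk_le_mk_of_subset hsub).trans_lt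
    ((Cardinal.card_iUnion_lt_iff_forall_of_isRegular hκ.lift hΓ).2 fun β => ?_)
  exact Cardinal.mk_image2_le.trans_lt (Cardinal.mul_lt_of_lt hκ.lift.aleph0_le
    ((H.cond β β.2).card_level_lt le_rfl) (card_seeds_lt hκ hθ hδ))

/-- `z^γ(γ)` is not `=*` to any seed. -/
lemma nstar_zUnion_notMem (H : LimitData κ θo InF γ δ Γ p z)
    (hlt : ∀ β ∈ Γ, (p β).η < supEta Γ p) (hγδ : γ < δ) (hx : x ∈ treeUnion Γ p) :
    nstar x (zUnion Γ z γ) ∉ limitTree (treeUnion Γ p) (seeds θo γ δ Γ p z) := by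
  intro hmem
  have HS := H.isSeedSet hlt
  have hw := (H.isNode_zUnion le_rfl hγδ).ndom_eq
  have hlev : nstar x (zUnion Γ z γ) ∈ level _ (supEta Γ p) := ⟨hmem, by rw [ndom_nstar, hw]⟩
  rw [HS.level_limitTree_self] at hlev
  obtain ⟨x', hx', b, hb, heq⟩ := hlev
  obtain ⟨c, hc, hdc⟩ := HS.ndom_lt hx
  obtain ⟨c', hc', hdc'⟩ := HS.ndom_lt hx'
  obtain ⟨β, hβ, hβc⟩ := H.exists_lt_eta (max_lt hc hc')
  have hes : EqStar (z β γ) (nrestrict b (p β).η) := by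
    rw [← H.nrestrict_zUnion le_rfl hγδ hβ]
    refine eqStar_nrestrict_of_nstar_eq heq.symm (hdc ▸ Iio_subset_Iio (le_max_left c c'))
      (hdc' ▸ Iio_subset_Iio (le_max_right c c')) ?_ hβc
    rw [hw]
    exact max_lt hc hc'
  have hβγ := H.lt β hβ
  rcases hb with ⟨τ, hτ, rfl⟩ | ⟨i, hi, rfl⟩
  · rw [H.nrestrict_topUnion hτ hβ] at hes
    rcases eq_zero_or_pos τ with rfl | hτ0
    · exact H.zf0 β hβ γ hβγ hγδ hes
    · exact not_eqStar_of_mutExc (H.zme β hβ γ hβγ hγδ τ hτ0 hτ) hes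
  · rw [H.nrestrict_zUnion hi.1.le hi.2 hβ] at hes
    exact H.zdist β hβ γ hβγ hγδ i (hβγ.trans hi.1) hi.2 hi.1.ne' hes

lemma mem_VSet_supEta (H : LimitData κ θo InF γ δ Γ p z)
    (hlt : ∀ β ∈ Γ, (p β).η < supEta Γ p) (hγδ : γ < δ) :
    supEta Γ p ∈ VSet (limitTree (treeUnion Γ p) (seeds θo γ δ Γ p z)) :=
  (H.isSeedSet hlt).mem_VSet_limitTree (H.isSuccLimit_supEta hlt)
    (H.isNode_zUnion le_rfl hγδ).ndom_eq
    (fun _ ha => H.nrestrict_mem_treeUnion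
      (fun β hβ => by rw [H.nrestrict_zUnion le_rfl hγδ hβ]; exact (H.z_mem_level hβ le_rfl hγδ).1)
      ha)
    fun _ hx => H.nstar_zUnion_notMem hlt hγδ hx

lemma ordClosed_VSet_limitTree (H : LimitData κ θo InF γ δ Γ p z)
    (hlt : ∀ β ∈ Γ, (p β).η < supEta Γ p) (hγδ : γ < δ) :
    OrdClosed (VSet (limitTree (treeUnion Γ p) (seeds θo γ δ Γ p z))) := by
  have HS := H.isSeedSet hlt
  intro a hlim hcl
  rcases lt_trichotomy a (supEta Γ p) with ha | rfl | ha
  · obtain ⟨β, hβ, haβ⟩ := H.exists_lt_eta ha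
    have hV : ∀ v ≤ (p β).η, v ∈ VSet (p β).T ↔ v ∈ VSet (limitTree _ _) := fun v hv =>
      mem_VSet_iff_of_endExtension (H.sext_limitCond hlt hβ).2.1
        (fun t ht => (HS.isNode_limitTree ht).imp fun _ h => h.2.ndom_eq) hv
    refine (hV a haβ.le).1 ((H.cond β hβ).ordClosed_VSet a hlim fun c hc => ?_)
    obtain ⟨v, hv, hvI⟩ := hcl c hc
    exact ⟨v, (hV v (hvI.2.trans haβ).le).2 hv, hvI⟩
  · exact H.mem_VSet_supEta hlt hγδ
  · obtain ⟨v, hv, hvI⟩ := hcl _ ha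
    exact absurd (HS.VSet_limitTree_subset H.treeUnion_nonempty hv) (not_le.2 hvI.1)

lemma limitPath_supEta : limitPath Γ p (supEta Γ p) τ = topUnion Γ p τ :=
  if_neg (lt_irrefl _)

lemma meAscentPath_limitPath (H : LimitData κ θo InF γ δ Γ p z)
    (hlt : ∀ β ∈ Γ, (p β).η < supEta Γ p) :
    MEAscentPath θo InF (limitTree (treeUnion Γ p) (seeds θo γ δ Γ p z)) (supEta Γ p + 1)
      (limitPath Γ p) := by
  have HS := H.isSeedSet hlt
  refine ⟨fun a ha τ hτ => ?_, fun a a' haa' ha' => ?_, fun a _ ha τ τ' hτ hτ' hne => ?_⟩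
  · rcases (Order.lt_add_one_iff.1 ha).eq_or_lt with rfl | ha
    · rw [limitPath_supEta, HS.level_limitTree_self]
      exact ⟨∅, HS.streamlined.empty_mem H.treeUnion_nonempty, _, Or.inl ⟨τ, hτ, rfl⟩,
        nstar_empty _⟩
    · obtain ⟨β, hβ, haβ⟩ := H.exists_lt_eta ha
      rw [H.limitPath_of_le hlt hβ haβ.le hτ, H.level_limitTree_of_le hlt hβ haβ.le]
      exact (H.cond β hβ).f_mem_level haβ.le hτ
  · rcases (Order.lt_add_one_iff.1 ha').eq_or_lt with rfl | ha'
    · obtain ⟨β, hβ, haβ⟩ := H.exists_lt_eta haa'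
      refine H.filter.mono ((H.cond β hβ).inF_supp haβ le_rfl) fun τ ⟨hτ, hcomp⟩ => ⟨hτ, Or.inl ?_⟩
      rw [H.limitPath_of_le hlt hβ haβ.le hτ, limitPath_supEta]
      exact (((H.cond β hβ).isNode_f haβ.le hτ).subset_of_le ((H.cond β hβ).isNode_f le_rfl hτ)
        haβ.le hcomp).trans (subset_biUnion_of_mem (u := fun β => (p β).f (p β).η τ) hβ)
    · obtain ⟨β, hβ, haβ⟩ := H.exists_lt_eta ha'
      refine H.filter.mono ((H.cond β hβ).inF_supp haa' haβ.le) fun τ ⟨hτ, hcomp⟩ => ⟨hτ, ?_⟩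
      rwa [H.limitPath_of_le hlt hβ (haa'.le.trans haβ.le) hτ, H.limitPath_of_le hlt hβ haβ.le hτ]
  · rcases (Order.lt_add_one_iff.1 ha).eq_or_lt with rfl | ha
    · rw [limitPath_supEta, limitPath_supEta]
      exact mutExc_biUnion (H.monotoneOn_top hτ) (H.monotoneOn_top hτ')
        fun β hβ => (H.cond β hβ).mutExc_f le_rfl hτ hτ' hne
    · obtain ⟨β, hβ, haβ⟩ := H.exists_lt_eta ha
      rw [H.limitPath_of_le hlt hβ haβ.le hτ, H.limitPath_of_le hlt hβ haβ.le hτ']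
      exact (H.cond β hβ).mutExc_f haβ.le hτ hτ' hne

lemma inF_mutExc_top (H : LimitData κ θo InF γ δ Γ p z) (hlt : ∀ β ∈ Γ, (p β).η < supEta Γ p)
    (ht : t ∈ level (limitTree (treeUnion Γ p) (seeds θo γ δ Γ p z)) (supEta Γ p)) :
    InF {τ | τ < θo ∧ MutExc t (limitPath Γ p (supEta Γ p) τ)} := by
  obtain ⟨β, hβ, x, hx, b, hb, rfl⟩ := H.exists_eq_nstar_of_mem_level_supEta hlt ht
  have hxn := (H.cond β hβ).isNode_of_mem_level hx
  obtain ⟨τ₀, hb⟩ : ∃ τ₀, ∀ τ < θo, τ ≠ τ₀ → MutExc b (topUnion Γ p τ) := by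
    rcases hb with ⟨τ₀, hτ₀, rfl⟩ | ⟨i, hi, rfl⟩
    · exact ⟨τ₀, fun τ hτ hne => mutExc_biUnion (H.monotoneOn_top hτ₀) (H.monotoneOn_top hτ)
        fun β hβ => (H.cond β hβ).mutExc_f le_rfl hτ₀ hτ hne.symm⟩
    · exact ⟨0, fun τ hτ hne => mutExc_biUnion (H.monotoneOn_z hi.1.le hi.2) (H.monotoneOn_top hτ)
        fun β hβ => H.zme β hβ i ((H.lt β hβ).trans hi.1) hi.2 τ (pos_iff_ne_zero.2 hne) hτ⟩
  have hxF : InF {τ | τ < θo ∧ MutExc x ((p β).f (p β).η τ)} := by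
    rcases eq_zero_or_pos (p β).η with h0 | h0
    · exact H.filter.mono (H.filter.setOf_ne 0)
        fun τ hτ => ⟨hτ.1, mutExc_of_isNodeOf_zero (h0 ▸ hxn)⟩
    · exact (H.cond β hβ).inF_mutExc h0 le_rfl hx
  refine H.filter.mono (H.filter.inter hxF (H.filter.setOf_ne τ₀))
    fun τ ⟨⟨hτ, hme⟩, _, hne⟩ => ⟨hτ, ?_⟩
  rw [limitPath_supEta]
  refine (MutExc.of_nrestrict ?_ hxn.ndom_eq.le).nstar (hb τ hτ hne)
  rwa [H.nrestrict_topUnion hτ hβ]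

lemma inF_mutExc_limitPath (H : LimitData κ θo InF γ δ Γ p z)
    (hlt : ∀ β ∈ Γ, (p β).η < supEta Γ p) (ha0 : 0 < a) (ha : a ≤ supEta Γ p)
    (ht : t ∈ level (limitTree (treeUnion Γ p) (seeds θo γ δ Γ p z)) a) :
    InF {τ | τ < θo ∧ MutExc t (limitPath Γ p a τ)} := by
  rcases ha.eq_or_lt with rfl | ha
  · exact H.inF_mutExc_top hlt ht
  · obtain ⟨β, hβ, haβ⟩ := H.exists_lt_eta ha
    rw [H.level_limitTree_of_le hlt hβ haβ.le] at ht
    refine H.filter.mono ((H.cond β hβ).inF_mutExc ha0 haβ.le ht) fun τ ⟨hτ, hme⟩ => ⟨hτ, ?_⟩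
    rwa [H.limitPath_of_le hlt hβ haβ.le hτ]

lemma isSCondX_limitCond (H : LimitData κ θo InF γ δ Γ p z)
    (hlt : ∀ β ∈ Γ, (p β).η < supEta Γ p) (hκ : κ.IsRegular) (hθ : θo < κ.ord)
    (hγδ : γ < δ) (hδ : δ < κ.ord) : IsSCondX κ θo InF (limitCond θo γ δ Γ p z) := by
  have HS := H.isSeedSet hlt
  have hpath := H.meAscentPath_limitPath hlt
  refine ⟨fun t ht => HS.isNode_limitTree ht, HS.isStreamlined_limitTree, HS.unifHomog_limitTree,
    HS.isNormalOfHeight_limitTree (Or.inl ⟨0, H.theta_pos, rfl⟩),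
    fun a ha => ⟨_, hpath.1 a (Order.lt_add_one_iff.2 ha) 0 H.theta_pos⟩, fun a ha => ?_, hpath,
    H.ordClosed_VSet_limitTree hlt hγδ, fun _ => H.mem_VSet_supEta hlt hγδ,
    fun a ha0 ha t ht => H.inF_mutExc_limitPath hlt ha0 ha ht⟩
  rcases ha.eq_or_lt with rfl | ha
  · exact H.card_level_supEta_lt hlt hκ hθ hγδ hδ
  · obtain ⟨β, hβ, haβ⟩ := H.exists_lt_eta ha
    change Cardinal.mk (level (limitTree _ _) a) < _
    rw [H.level_limitTree_of_le hlt hβ haβ.le]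
    exact (H.cond β hβ).card_level_lt haβ.le

lemma isLimitExtension_limitCond (H : LimitData κ θo InF γ δ Γ p z)
    (hlt : ∀ β ∈ Γ, (p β).η < supEta Γ p) (hκ : κ.IsRegular) (hθ : θo < κ.ord)
    (hγδ : γ < δ) (hδ : δ < κ.ord) :
    IsLimitExtension κ θo InF γ δ Γ p z (limitCond θo γ δ Γ p z) (zUnion Γ z) := by
  have HS := H.isSeedSet hlt
  have hU₀ := HS.streamlined.empty_mem H.treeUnion_nonempty
  refine ⟨H.isSCondX_limitCond hlt hκ hθ hγδ hδ, rfl, fun i hi hiδ => ⟨rfl, ?_⟩,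
    fun β hβ => ⟨H.sext_limitCond hlt hβ, ?_⟩, fun y hy => ?_⟩
  · exact Or.inr ⟨∅, hU₀, _, Or.inr ⟨i, ⟨hi, hiδ⟩, rfl⟩, nstar_empty _⟩
  · refine Subset.antisymm (fun τ hτ => hτ.1) fun τ hτ => ⟨hτ, Or.inl ?_⟩
    change _ ⊆ limitPath Γ p (supEta Γ p) τ
    rw [limitPath_supEta]
    exact subset_biUnion_of_mem (u := fun β => (p β).f (p β).η τ) hβ
  · have hlev : y ∈ (limitCond θo γ δ Γ p z).T ↔
        y ∈ level (limitTree (treeUnion Γ p) (seeds θo γ δ Γ p z)) (supEta Γ p) :=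
      ⟨fun hyT => ⟨hyT, hy.ndom_eq⟩, fun hyT => hyT.1⟩
    rw [hlev, HS.level_limitTree_self]
    change _ ↔ ∃ x, _ ∧ ((∃ τ, τ < θo ∧ y = nstar x (limitPath Γ p (supEta Γ p) τ)) ∨ _)
    simp only [limitPath_supEta]
    constructor
    · rintro ⟨x, hx, b, hb, rfl⟩
      obtain ⟨β, hβ, hx⟩ := mem_iUnion₂.1 hx
      refine ⟨x, ⟨β, hβ, hx⟩, ?_⟩
      rcases hb with ⟨τ, hτ, rfl⟩ | ⟨i, hi, rfl⟩
      exacts [Or.inl ⟨τ, hτ, rfl⟩, Or.inr ⟨i, hi.1, hi.2, rfl⟩]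
    · rintro ⟨x, ⟨β, hβ, hx⟩, ⟨τ, hτ, rfl⟩ | ⟨i, hi, hiδ, rfl⟩⟩
      · exact mem_image2_of_mem (mem_biUnion hβ hx) (Or.inl ⟨τ, hτ, rfl⟩)
      · exact mem_image2_of_mem (mem_biUnion hβ hx) (Or.inr ⟨i, ⟨hi, hiδ⟩, rfl⟩)

end LimitData

theorem statement3_general
    (θ κ : Cardinal) (hθreg : θ.IsRegular) (hκreg : κ.IsRegular) (hθκ : θ < κ)
    (ζ : Ordinal) (X : Ordinal → Set Ordinal)
    (hXsub : ∀ ξ, ξ < ζ → X ξ ⊆ Set.Iio θ.ord)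
    (hXdec : ∀ ξ ξ', ξ ≤ ξ' → ξ' < ζ → X ξ' ⊆ X ξ)
    (hXint : (⋂ ξ ∈ Set.Iio ζ, X ξ) = ∅)
    (γ : Ordinal) (hγlim : Order.IsSuccLimit γ)
    (δ : Ordinal) (hγδ : γ < δ) (hδκ : δ < κ.ord)
    (Γ : Set Ordinal) (hΓsub : Γ ⊆ Set.Iio γ)
    (hΓcof : ∀ β, β < γ → ∃ β' ∈ Γ, β ≤ β')
    (p : Ordinal → SCond) (z : Ordinal → Ordinal → PNode)
    -- `⟨⟨T^β, f^β⟩ : β ∈ Γ⟩` is a decreasing sequence of conditions in `𝕊^κ_𝐗`: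
    (hcond : ∀ β ∈ Γ, IsSCondX κ θ.ord (InFX ζ X) (p β))
    (hdec : ∀ α ∈ Γ, ∀ β ∈ Γ, α ≤ β → sext θ.ord (p β) (p α))
    -- the properties of `z^β : (β, δ) → T^β`:
    (hztop : ∀ β ∈ Γ, ∀ i, β < i → i < δ → z β i ∈ level (p β).T (p β).η)
    (hzdist : ∀ β ∈ Γ, ∀ i, β < i → i < δ → ∀ i', β < i' → i' < δ → i' ≠ i →
      ¬ EqStar (z β i) (z β i'))
    (hzf0 : ∀ β ∈ Γ, ∀ i, β < i → i < δ → ¬ EqStar (z β i) ((p β).f (p β).η 0))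
    (hzme : ∀ β ∈ Γ, ∀ i, β < i → i < δ → ∀ τ, 0 < τ → τ < θ.ord →
      MutExc (z β i) ((p β).f (p β).η τ))
    -- the coherence properties over pairs from `Γ`:
    (hsupp : ∀ α ∈ Γ, ∀ β ∈ Γ,
      supp θ.ord ((p α).f (p α).η) ((p β).f (p β).η) = Set.Iio θ.ord)
    (hzmono : ∀ α ∈ Γ, ∀ β ∈ Γ, ∀ i, α < β → β < i → i < δ → z α i ⊆ z β i) :
    ∃ q : SCond, ∃ zg : Ordinal → PNode,
      IsSCondX κ θ.ord (InFX ζ X) q ∧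
      q.η = sSup ((fun β => (p β).η) '' Γ) ∧
      (∀ i, γ < i → i < δ → (zg i = ⋃ β ∈ Γ, z β i) ∧ zg i ∈ q.T) ∧
      (∀ β ∈ Γ, sext θ.ord q (p β) ∧
        supp θ.ord ((p β).f (p β).η) (q.f q.η) = Set.Iio θ.ord) ∧
      (∀ y : PNode, IsNodeOf κ.ord q.η y →
        (y ∈ q.T ↔
          ∃ x, (∃ β ∈ Γ, x ∈ (p β).T) ∧
            ((∃ τ, τ < θ.ord ∧ y = nstar x (q.f q.η τ)) ∨
             (∃ i, γ < i ∧ i < δ ∧ y = nstar x (zg i))))) := by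
  have H : LimitData κ θ.ord (InFX ζ X) γ δ Γ p z :=
    { filter := isFreeFilterPred_inFX hXsub hXdec hXint
      theta_pos := Cardinal.ord_pos.2 hθreg.pos
      nonempty := (hΓcof 0 hγlim.pos).imp fun _ h => h.1
      lt := fun _ hβ => hΓsub hβ
      cond := hcond, dec := hdec, ztop := hztop, zdist := hzdist, zf0 := hzf0, zme := hzme
      supp_top := hsupp, zmono := hzmono }
  obtain ⟨q, hq⟩ : ∃ q, IsLimitExtension κ θ.ord (InFX ζ X) γ δ Γ p z q (zUnion Γ z) := by
    by_cases hmax : ∃ β₀ ∈ Γ, ∀ β ∈ Γ, (p β).η ≤ (p β₀).η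
    · obtain ⟨β₀, hβ₀, hmax⟩ := hmax
      exact ⟨p β₀, H.isLimitExtension_of_isMax hβ₀ hmax⟩
    · push Not at hmax
      refine ⟨_, H.isLimitExtension_limitCond (fun β hβ => ?_) hκreg
        (Cardinal.ord_lt_ord.2 hθκ) hγδ hδκ⟩
      obtain ⟨β', hβ', h⟩ := hmax β hβ
      exact h.trans_le (H.eta_le_supEta hβ')
  exact ⟨q, zUnion Γ z, hq⟩

/-- Statement 3 (Limit extension), Lemma 3.5 of the paper. -/
theorem statement3
    (θ κ : Cardinal) (hθreg : θ.IsRegular) (hκreg : κ.IsRegular) (hθκ : θ < κ)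
    (hpow : ∀ lam : Cardinal, lam < κ → lam ^ θ < κ)
    (ζ : Ordinal) (X : Ordinal → Set Ordinal)
    (hXne : ∀ ξ, ξ < ζ → (X ξ).Nonempty)
    (hXsub : ∀ ξ, ξ < ζ → X ξ ⊆ Set.Iio θ.ord)
    (hXdec : ∀ ξ ξ', ξ ≤ ξ' → ξ' < ζ → X ξ' ⊆ X ξ)
    (hXco : Cardinal.mk ↥(Set.Iio θ.ord \ X 0) = Cardinal.lift.{1} θ)
    (hXint : (⋂ ξ ∈ Set.Iio ζ, X ξ) = ∅)
    (γ : Ordinal) (hγlim : Order.IsSuccLimit γ) (hγκ : γ < κ.ord)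
    (δ : Ordinal) (hγδ : γ < δ) (hδκ : δ < κ.ord)
    (Γ : Set Ordinal) (hΓsub : Γ ⊆ Set.Iio γ)
    (hΓcof : ∀ β, β < γ → ∃ β' ∈ Γ, β ≤ β')
    (p : Ordinal → SCond) (z : Ordinal → Ordinal → PNode)
    -- `⟨⟨T^β, f^β⟩ : β ∈ Γ⟩` is a decreasing sequence of conditions in `𝕊^κ_𝐗`:
    (hcond : ∀ β ∈ Γ, IsSCondX κ θ.ord (InFX ζ X) (p β))
    (hdec : ∀ α ∈ Γ, ∀ β ∈ Γ, α ≤ β → sext θ.ord (p β) (p α))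
    -- the properties of `z^β : (β, δ) → T^β`:
    (hztop : ∀ β ∈ Γ, ∀ i, β < i → i < δ → z β i ∈ level (p β).T (p β).η)
    (hzdist : ∀ β ∈ Γ, ∀ i, β < i → i < δ → ∀ i', β < i' → i' < δ → i' ≠ i →
      ¬ EqStar (z β i) (z β i'))
    (hzf0 : ∀ β ∈ Γ, ∀ i, β < i → i < δ → ¬ EqStar (z β i) ((p β).f (p β).η 0))
    (hzme : ∀ β ∈ Γ, ∀ i, β < i → i < δ → ∀ τ, 0 < τ → τ < θ.ord →
      MutExc (z β i) ((p β).f (p β).η τ))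
    -- the coherence properties over pairs from `Γ`:
    (hsupp : ∀ α ∈ Γ, ∀ β ∈ Γ,
      supp θ.ord ((p α).f (p α).η) ((p β).f (p β).η) = Set.Iio θ.ord)
    (hzmono : ∀ α ∈ Γ, ∀ β ∈ Γ, ∀ i, α < β → β < i → i < δ → z α i ⊆ z β i) :
    ∃ q : SCond, ∃ zg : Ordinal → PNode,
      IsSCondX κ θ.ord (InFX ζ X) q ∧
      q.η = sSup ((fun β => (p β).η) '' Γ) ∧
      (∀ i, γ < i → i < δ → (zg i = ⋃ β ∈ Γ, z β i) ∧ zg i ∈ q.T) ∧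
      (∀ β ∈ Γ, sext θ.ord q (p β) ∧
        supp θ.ord ((p β).f (p β).η) (q.f q.η) = Set.Iio θ.ord) ∧
      (∀ y : PNode, IsNodeOf κ.ord q.η y →
        (y ∈ q.T ↔
          ∃ x, (∃ β ∈ Γ, x ∈ (p β).T) ∧
            ((∃ τ, τ < θ.ord ∧ y = nstar x (q.f q.η τ)) ∨
             (∃ i, γ < i ∧ i < δ ∧ y = nstar x (zg i))))) :=
  statement3_general θ κ hθreg hκreg hθκ ζ X hXsub hXdec hXint γ hγlim δ hγδ hδκ Γ hΓsub hΓcof p z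
    hcond hdec hztop hzdist hzf0 hzme hsupp hzmono
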